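/- arXiv:1611.03998 — 2 statements merged into one kernel-verified Lean document; each statement's English description precedes it below -/
import Mathlib

section
/- Let p, q be unit quaternions and let Z = (U,V), Z′ = (U′,V′) be tangent vectors to S³×S³ at (p,q). Then ½(⟨Z,Z′⟩ + ⟨JZ,JZ′⟩) = (4/3)(⟨U,U′⟩ + ⟨V,V′⟩) − (2/3)(⟨p⁻¹U, q⁻¹V′⟩ + ⟨p⁻¹U′, q⁻¹V⟩). -/
noncomputable section

open Quaternion

/-- Euclidean inner product on the quaternions: `⟨x,y⟩ = Re (x * star y)`. -/
def ipQ (x y : ℍ[ℝ]) : ℝ := (x * star y).re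

/-- Euclidean inner product on pairs of quaternions. -/
def ip2Q (Z W : ℍ[ℝ] × ℍ[ℝ]) : ℝ := ipQ Z.1 W.1 + ipQ Z.2 W.2

/-- The almost complex structure `J` of the nearly Kähler `S³ × S³` at `(p,q)`:
`J(U,V) = (1/√3)(2pq⁻¹V − U, −2qp⁻¹U + V)`. -/
def Jmap (p q : ℍ[ℝ]) (Z : ℍ[ℝ] × ℍ[ℝ]) : ℍ[ℝ] × ℍ[ℝ] :=
  ((Real.sqrt 3)⁻¹ • ((2 : ℝ) • (p * q⁻¹ * Z.2) - Z.1),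
   (Real.sqrt 3)⁻¹ • (-((2 : ℝ) • (q * p⁻¹ * Z.1)) + Z.2))

/-- The nearly Kähler metric `g(Z,Z') = ½(⟨Z,Z'⟩ + ⟨JZ,JZ'⟩)`. -/
def gmet (p q : ℍ[ℝ]) (Z W : ℍ[ℝ] × ℍ[ℝ]) : ℝ :=
  (1 / 2) * (ip2Q Z W + ip2Q (Jmap p q Z) (Jmap p q W))

/-- The almost product structure `P(U,V) = (pq⁻¹V, qp⁻¹U)`. -/
def Pmap (p q : ℍ[ℝ]) (Z : ℍ[ℝ] × ℍ[ℝ]) : ℍ[ℝ] × ℍ[ℝ] :=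
  (p * q⁻¹ * Z.2, q * p⁻¹ * Z.1)

/-- The usual product structure `Q(U,V) = (−U, V)`. -/
def Qmap (Z : ℍ[ℝ] × ℍ[ℝ]) : ℍ[ℝ] × ℍ[ℝ] := (-Z.1, Z.2)

/-- Cross product of (imaginary) quaternions: `α × β = ½(αβ − βα)`. -/
def crossQ (a b : ℍ[ℝ]) : ℍ[ℝ] := (1 / 2 : ℝ) • (a * b - b * a)

/-- The tensor `G = ∇̃J` at `(p,q)`, evaluated on tangent vectors `X = (pα, qβ)`,
`Y = (pγ, qδ)` (so `α = p⁻¹X₁`, etc.):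
`G(X,Y) = (2/(3√3))(p(β×γ + α×δ + α×γ − 2β×δ), q(−α×δ − β×γ + 2α×γ − β×δ))`. -/
def Gmap (p q : ℍ[ℝ]) (X Y : ℍ[ℝ] × ℍ[ℝ]) : ℍ[ℝ] × ℍ[ℝ] :=
  (2 / (3 * Real.sqrt 3) : ℝ) •
    ((p * (crossQ (q⁻¹ * X.2) (p⁻¹ * Y.1) + crossQ (p⁻¹ * X.1) (q⁻¹ * Y.2)
        + crossQ (p⁻¹ * X.1) (p⁻¹ * Y.1) - (2 : ℝ) • crossQ (q⁻¹ * X.2) (q⁻¹ * Y.2)),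
      q * (-(crossQ (p⁻¹ * X.1) (q⁻¹ * Y.2)) - crossQ (q⁻¹ * X.2) (p⁻¹ * Y.1)
        + (2 : ℝ) • crossQ (p⁻¹ * X.1) (p⁻¹ * Y.1) - crossQ (q⁻¹ * X.2) (q⁻¹ * Y.2))))

/-!
Left multiplication by a unit quaternion is an orthogonal map of `ℍ` whose adjoint is left
multiplication by its inverse. Expanding `⟨JZ, JZ'⟩` bilinearly, the terms `⟨pq⁻¹V, pq⁻¹V'⟩` and
`⟨qp⁻¹U, qp⁻¹U'⟩` reduce to `⟨V, V'⟩` and `⟨U, U'⟩`, and every mixed term to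
`±⟨p⁻¹U, q⁻¹V'⟩` or `±⟨p⁻¹U', q⁻¹V⟩`, so `⟨JZ, JZ'⟩ = (5/3)⟨Z, Z'⟩ - (4/3)(⋯)`.
-/

open scoped RealInnerProductSpace

namespace Quaternion

theorem re_mul_comm (a b : ℍ) : (a * b).re = (b * a).re := by
  simp only [re_mul]
  ring

theorem inner_mul_left_eq_inner_star_mul (a x y : ℍ) : ⟪a * x, y⟫ = ⟪x, star a * y⟫ := by
  simp only [inner_def, star_mul, star_star, mul_assoc]
  rw [re_mul_comm, mul_assoc, re_mul_comm]

theorem inv_eq_star_of_norm_eq_one {a : ℍ} (ha : ‖a‖ = 1) : a⁻¹ = star a := by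
  rw [inv_def, normSq_eq_norm_mul_self, ha, mul_one, inv_one, one_smul]

theorem inner_mul_left_eq_inner_inv_mul {a : ℍ} (ha : ‖a‖ = 1) (x y : ℍ) :
    ⟪a * x, y⟫ = ⟪x, a⁻¹ * y⟫ := by
  rw [inv_eq_star_of_norm_eq_one ha, inner_mul_left_eq_inner_star_mul]

theorem inner_mul_mul_left_of_norm_eq_one {a : ℍ} (ha : ‖a‖ = 1) (x y : ℍ) :
    ⟪a * x, a * y⟫ = ⟪x, y⟫ := by
  rw [inner_mul_left_eq_inner_inv_mul ha, inv_mul_cancel_left₀ (norm_ne_zero_iff.mp (by simp [ha]))]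

end Quaternion

theorem ipQ_eq_inner (x y : ℍ[ℝ]) : ipQ x y = ⟪x, y⟫ := rfl

theorem ip2Q_Jmap {p q : ℍ[ℝ]} (hp : ‖p‖ = 1) (hq : ‖q‖ = 1) (Z W : ℍ[ℝ] × ℍ[ℝ]) :
    ip2Q (Jmap p q Z) (Jmap p q W) =
      (5 / 3) * ip2Q Z W - (4 / 3) * (⟪p⁻¹ * Z.1, q⁻¹ * W.2⟫ + ⟪p⁻¹ * W.1, q⁻¹ * Z.2⟫) := by
  have hpq : ‖p * q⁻¹‖ = 1 := by rw [norm_mul, norm_inv, hp, hq, inv_one, one_mul]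
  have hqp : ‖q * p⁻¹‖ = 1 := by rw [norm_mul, norm_inv, hp, hq, inv_one, one_mul]
  have hs : (√3)⁻¹ * (√3)⁻¹ = (1 / 3 : ℝ) := by
    rw [← mul_inv, Real.mul_self_sqrt (by norm_num : (0 : ℝ) ≤ 3), one_div]
  have hP (U V : ℍ[ℝ]) : ⟪U, p * q⁻¹ * V⟫ = ⟪p⁻¹ * U, q⁻¹ * V⟫ := by
    rw [real_inner_comm, mul_assoc, Quaternion.inner_mul_left_eq_inner_inv_mul hp, real_inner_comm]
  have hQ (V U : ℍ[ℝ]) : ⟪V, q * p⁻¹ * U⟫ = ⟪p⁻¹ * U, q⁻¹ * V⟫ := by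
    rw [real_inner_comm, mul_assoc, Quaternion.inner_mul_left_eq_inner_inv_mul hq]
  simp only [ip2Q, Jmap, ipQ_eq_inner, real_inner_smul_left, real_inner_smul_right,
    inner_sub_left, inner_sub_right, inner_add_left, inner_add_right, inner_neg_left,
    inner_neg_right]
  simp only [Quaternion.inner_mul_mul_left_of_norm_eq_one hpq,
    Quaternion.inner_mul_mul_left_of_norm_eq_one hqp, real_inner_comm _ (p * q⁻¹ * _),
    real_inner_comm _ (q * p⁻¹ * _), hP, hQ]
  linear_combination (5 * ⟪Z.1, W.1⟫ + 5 * ⟪Z.2, W.2⟫ - 4 * ⟪p⁻¹ * Z.1, q⁻¹ * W.2⟫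
    - 4 * ⟪p⁻¹ * W.1, q⁻¹ * Z.2⟫) * hs

theorem stmt1_general (p q : ℍ[ℝ]) (hp : ‖p‖ = 1) (hq : ‖q‖ = 1)
    (Z Z' : ℍ[ℝ] × ℍ[ℝ]) :
    gmet p q Z Z' =
      (4 / 3) * (ipQ Z.1 Z'.1 + ipQ Z.2 Z'.2)
        - (2 / 3) * (ipQ (p⁻¹ * Z.1) (q⁻¹ * Z'.2) + ipQ (p⁻¹ * Z'.1) (q⁻¹ * Z.2)) := by
  have hJ := ip2Q_Jmap hp hq Z Z'
  simp only [gmet, ip2Q, ipQ_eq_inner] at hJ ⊢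
  linarith

/-- the nearly Kähler metric in terms of the Euclidean product metric. -/
theorem stmt1 (p q : ℍ[ℝ]) (hp : ‖p‖ = 1) (hq : ‖q‖ = 1)
    (Z Z' : ℍ[ℝ] × ℍ[ℝ]) (hZ1 : ipQ Z.1 p = 0) (hZ2 : ipQ Z.2 q = 0)
    (hZ'1 : ipQ Z'.1 p = 0) (hZ'2 : ipQ Z'.2 q = 0) :
    gmet p q Z Z' =
      (4 / 3) * (ipQ Z.1 Z'.1 + ipQ Z.2 Z'.2)
        - (2 / 3) * (ipQ (p⁻¹ * Z.1) (q⁻¹ * Z'.2) + ipQ (p⁻¹ * Z'.1) (q⁻¹ * Z.2)) :=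
  stmt1_general p q hp hq Z Z'
end
end

section
/- Let p, q be unit quaternions, Λ ∈ ℝ, and let Z = (U,V) be a tangent vector to S³×S³ at (p,q) with g(Z,Z) = 1 and PZ = cos(2Λ + 2π/3) Z + sin(2Λ + 2π/3) JZ. Then ⟨U,U⟩ = sin²Λ (Euclidean squared length of the projection of Z to the first factor). -/
noncomputable section

open Quaternion

/-!
`P` and `J` anticommute and `J² = -1`, so for `φ = Λ + π/3` the eigen-equation
`PZ = cos 2φ Z + sin 2φ JZ` makes `Y = cos φ Z + sin φ JZ` a fixed vector of `P`, and
then `Z = cos φ Y - sin φ JY`. A `P`-fixed `Y` satisfies `Y₁ = pq⁻¹Y₂`, which turns `Z` into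
`((cos φ - sin φ/√3) Y₁, (cos φ + sin φ/√3) Y₂)` with `g(Z,Z) = 4/3 |Y₁|²`; finally
`cos φ - sin φ/√3 = -2 sin Λ/√3`.
-/

open Real

theorem exists_fixed_of_apply_eq_double_rotation {R M : Type*} [CommRing R] [AddCommGroup M]
    [Module R M] {P J : Module.End R M} (hJJ : ∀ x, J (J x) = -x)
    (hPJ : ∀ x, P (J x) = -J (P x)) {c s : R} (hcs : c ^ 2 + s ^ 2 = 1) {Z : M}
    (hZ : P Z = (c ^ 2 - s ^ 2) • Z + (2 * s * c) • J Z) :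
    ∃ Y, P Y = Y ∧ Z = c • Y - s • J Y := by
  refine ⟨c • Z + s • J Z, ?_, ?_⟩
  · simp only [map_add, map_smul, hPJ, hZ, hJJ, smul_neg]
    linear_combination (norm := module) (c * hcs) • Z + (s * hcs) • J Z
  · simp only [map_add, map_smul, hJJ, smul_neg]
    linear_combination (norm := module) (-hcs) • Z

lemma ipQ_self (x : ℍ[ℝ]) : ipQ x x = ‖x‖ ^ 2 := by
  rw [ipQ, ← Quaternion.inner_def, real_inner_self_eq_norm_sq]

lemma gmet_self (p q : ℍ[ℝ]) (Z : ℍ[ℝ] × ℍ[ℝ]) :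
    gmet p q Z Z =
      (‖Z.1‖ ^ 2 + ‖Z.2‖ ^ 2 + ‖(Jmap p q Z).1‖ ^ 2 + ‖(Jmap p q Z).2‖ ^ 2) / 2 := by
  simp only [gmet, ip2Q, ipQ_self]
  ring

@[simps]
def Pmapₗ (p q : ℍ[ℝ]) : Module.End ℝ (ℍ[ℝ] × ℍ[ℝ]) where
  toFun := Pmap p q
  map_add' _ _ := Prod.ext (mul_add _ _ _) (mul_add _ _ _)
  map_smul' _ _ := Prod.ext (mul_smul_comm _ _ _) (mul_smul_comm _ _ _)

@[simps]
def Jmapₗ (p q : ℍ[ℝ]) : Module.End ℝ (ℍ[ℝ] × ℍ[ℝ]) where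
  toFun := Jmap p q
  map_add' _ _ := by
    ext1 <;> simp only [Jmap, Prod.fst_add, Prod.snd_add, mul_add] <;> module
  map_smul' _ _ := by
    ext1 <;> simp only [Jmap, Prod.smul_fst, Prod.smul_snd, mul_smul_comm, RingHom.id_apply] <;>
      module

section

variable {p q : ℍ[ℝ]}

lemma mul_inv_mul_mul_inv_mul (hp : p ≠ 0) (hq : q ≠ 0) (x : ℍ[ℝ]) :
    p * q⁻¹ * (q * p⁻¹ * x) = x := by
  rw [← mul_assoc, mul_assoc p, inv_mul_cancel_left₀ hq, mul_inv_cancel₀ hp, one_mul]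

lemma Jmap_Jmap (hp : p ≠ 0) (hq : q ≠ 0) (Z : ℍ[ℝ] × ℍ[ℝ]) :
    Jmap p q (Jmap p q Z) = -Z := by
  have h3 : (√3)⁻¹ * (√3)⁻¹ = (1 / 3 : ℝ) := by
    rw [← mul_inv, mul_self_sqrt (by norm_num)]
    norm_num
  refine Prod.ext ?_ ?_ <;>
    simp only [Jmap, mul_add, mul_sub, mul_neg, mul_smul_comm, mul_inv_mul_mul_inv_mul hp hq,
      mul_inv_mul_mul_inv_mul hq hp, Prod.fst_neg, Prod.snd_neg]
  · linear_combination (norm := module) (-3 * h3) • Z.1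
  · linear_combination (norm := module) (-3 * h3) • Z.2

lemma Pmap_Jmap (hp : p ≠ 0) (hq : q ≠ 0) (Z : ℍ[ℝ] × ℍ[ℝ]) :
    Pmap p q (Jmap p q Z) = -Jmap p q (Pmap p q Z) := by
  refine Prod.ext ?_ ?_ <;>
    simp only [Jmap, Pmap, mul_add, mul_sub, mul_neg, mul_smul_comm,
      mul_inv_mul_mul_inv_mul hp hq, mul_inv_mul_mul_inv_mul hq hp, Prod.fst_neg, Prod.snd_neg] <;>
    module

lemma Pmap_eq_self_iff {Y : ℍ[ℝ] × ℍ[ℝ]} :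
    Pmap p q Y = Y ↔ p * q⁻¹ * Y.2 = Y.1 ∧ q * p⁻¹ * Y.1 = Y.2 :=
  Prod.ext_iff

lemma smul_sub_smul_Jmap_of_Pmap_eq_self {Y : ℍ[ℝ] × ℍ[ℝ]} (hY : Pmap p q Y = Y) (c s : ℝ) :
    c • Y - s • Jmap p q Y = ((c - s / √3) • Y.1, (c + s / √3) • Y.2) := by
  obtain ⟨h1, h2⟩ := Pmap_eq_self_iff.mp hY
  refine Prod.ext ?_ ?_ <;>
    simp only [Jmap, Prod.fst_sub, Prod.snd_sub, Prod.smul_fst, Prod.smul_snd, h1, h2] <;>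
    module

lemma gmet_smul_of_Pmap_eq_self (hpq : ‖p‖ = ‖q‖) (hq : q ≠ 0) {Y : ℍ[ℝ] × ℍ[ℝ]}
    (hY : Pmap p q Y = Y) (a b : ℝ) :
    gmet p q (a • Y.1, b • Y.2) (a • Y.1, b • Y.2) =
      4 / 3 * (a ^ 2 - a * b + b ^ 2) * ‖Y.1‖ ^ 2 := by
  obtain ⟨h1, h2⟩ := Pmap_eq_self_iff.mp hY
  have hnorm : ‖Y.2‖ = ‖Y.1‖ := by
    rw [← h1, norm_mul, norm_mul, norm_inv, hpq, mul_inv_cancel₀ (norm_ne_zero_iff.mpr hq),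
      one_mul]
  have hJ : Jmap p q (a • Y.1, b • Y.2) =
      (((2 * b - a) / √3) • Y.1, ((b - 2 * a) / √3) • Y.2) := by
    refine Prod.ext ?_ ?_ <;> simp only [Jmap, mul_smul_comm, h1, h2] <;> module
  rw [gmet_self, hJ]
  simp only [norm_smul, mul_pow, Real.norm_eq_abs, sq_abs, div_pow, hnorm,
    sq_sqrt (show (0 : ℝ) ≤ 3 by norm_num)]
  ring

end

lemma sub_div_sqrt_three_sq_sub_mul_add_sq (c s : ℝ) :
    (c - s / √3) ^ 2 - (c - s / √3) * (c + s / √3) + (c + s / √3) ^ 2 = c ^ 2 + s ^ 2 := by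
  have h : (√3)⁻¹ ^ 2 = 1 / 3 := by rw [inv_pow, sq_sqrt (by norm_num), one_div]
  linear_combination 3 * s ^ 2 * h

lemma cos_add_pi_div_three_sub_sin_div_sqrt_three (x : ℝ) :
    cos (x + π / 3) - sin (x + π / 3) / √3 = -2 * sin x / √3 := by
  rw [eq_div_iff (by positivity), sub_mul, div_mul_cancel₀ _ (by positivity), cos_add, sin_add,
    cos_pi_div_three, sin_pi_div_three]
  linear_combination (-sin x / 2) * sq_sqrt (show (0 : ℝ) ≤ 3 by norm_num)

theorem stmt6_general (p q : ℍ[ℝ]) (hp : ‖p‖ = 1) (hq : ‖q‖ = 1) (Λ : ℝ)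
    (Z : ℍ[ℝ] × ℍ[ℝ])
    (hunit : gmet p q Z Z = 1)
    (heig : Pmap p q Z =
      Real.cos (2 * Λ + 2 * Real.pi / 3) • Z
        + Real.sin (2 * Λ + 2 * Real.pi / 3) • Jmap p q Z) :
    ipQ Z.1 Z.1 = Real.sin Λ ^ 2 := by
  have hp0 : p ≠ 0 := by rintro rfl; simp at hp
  have hq0 : q ≠ 0 := by rintro rfl; simp at hq
  rw [show 2 * Λ + 2 * π / 3 = 2 * (Λ + π / 3) by ring, cos_two_mul', sin_two_mul] at heig
  obtain ⟨Y, hY, rfl⟩ := exists_fixed_of_apply_eq_double_rotation (P := Pmapₗ p q)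
    (J := Jmapₗ p q) (Jmap_Jmap hp0 hq0) (Pmap_Jmap hp0 hq0) (cos_sq_add_sin_sq _) heig
  rw [Pmapₗ_apply] at hY
  rw [Jmapₗ_apply, smul_sub_smul_Jmap_of_Pmap_eq_self hY] at hunit ⊢
  rw [gmet_smul_of_Pmap_eq_self (hp.trans hq.symm) hq0 hY, sub_div_sqrt_three_sq_sub_mul_add_sq,
    cos_sq_add_sin_sq] at hunit
  rw [ipQ_self, norm_smul, mul_pow, Real.norm_eq_abs, sq_abs,
    cos_add_pi_div_three_sub_sin_div_sqrt_three, div_pow, sq_sqrt (by norm_num)]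
  linear_combination sin Λ ^ 2 * hunit

/-- a `g`-unit `P`-eigendirection with angle function `Λ + π/3`
projects to the first factor with Euclidean squared length `sin²Λ`. -/
theorem stmt6 (p q : ℍ[ℝ]) (hp : ‖p‖ = 1) (hq : ‖q‖ = 1) (Λ : ℝ)
    (Z : ℍ[ℝ] × ℍ[ℝ]) (hZ1 : ipQ Z.1 p = 0) (hZ2 : ipQ Z.2 q = 0)
    (hunit : gmet p q Z Z = 1)
    (heig : Pmap p q Z =
      Real.cos (2 * Λ + 2 * Real.pi / 3) • Z
        + Real.sin (2 * Λ + 2 * Real.pi / 3) • Jmap p q Z) :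
    ipQ Z.1 Z.1 = Real.sin Λ ^ 2 :=
  stmt6_general p q hp hq Λ Z hunit heig
end
end
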